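/- Let G be a connected non-complete 2K2-free simple graph and let u be a vertex of G of minimum degree, i.e., deg(u) ≤ deg(v) for all vertices v of G. Then the neighborhood N_G(u) of u is a minimal vertex separator of G. -/

import Mathlib

open SimpleGraph

/-- A simple graph is `2K₂`-free: there are no four pairwise distinct vertices `a b c d`
with `ab` and `cd` edges and none of `ac, ad, bc, bd` an edge. -/
def TwoK2Free {V : Type*} (G : SimpleGraph V) : Prop :=
  ¬ ∃ a b c d : V, a ≠ b ∧ a ≠ c ∧ a ≠ d ∧ b ≠ c ∧ b ≠ d ∧ c ≠ d ∧
    G.Adj a b ∧ G.Adj c d ∧ ¬ G.Adj a c ∧ ¬ G.Adj a d ∧ ¬ G.Adj b c ∧ ¬ G.Adj b d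

/-- `S ⊊ V(G)` is a vertex separator: deleting `S` leaves a disconnected graph. -/
def IsSeparator {V : Type*} (G : SimpleGraph V) (S : Set V) : Prop :=
  S ≠ Set.univ ∧ ¬ (G.induce (Sᶜ : Set V)).Connected

/-- A minimal vertex separator: no proper subset is a separator. -/
def IsMinSeparator {V : Type*} (G : SimpleGraph V) (S : Set V) : Prop :=
  IsSeparator G S ∧ ∀ S' : Set V, S' ⊂ S → ¬ IsSeparator G S'

/-- A connected component is trivial if its support is a single vertex. -/
def IsTrivialComp {α : Type*} {H : SimpleGraph α} (C : H.ConnectedComponent) : Prop :=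
  ∃ v, C.supp = {v}

/-! If `u` were adjacent to every other vertex it would have the largest possible degree, so by
minimality every vertex would be universal; hence some `w ∉ N[u]` exists, and `u` is isolated from
`w` in `G - N(u)`. For `S ⊊ N(u)` pick `x ∈ N(u) \ S`: every vertex `v ∉ S` keeps a neighbour
`y ∉ S` because `deg v ≥ deg u > |S|`, and in the `2K₂`-free graph `G - S` the edges `ux` and `vy`
lie in one component. -/

namespace TwoK2Free

variable {V : Type*} {G : SimpleGraph V}

theorem induce (h : TwoK2Free G) (s : Set V) : TwoK2Free (G.induce s) := by
  rintro ⟨a, b, c, d, hab, hac, had, hbc, hbd, hcd, hadj⟩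
  exact h ⟨a, b, c, d, Subtype.coe_ne_coe.2 hab, Subtype.coe_ne_coe.2 hac,
    Subtype.coe_ne_coe.2 had, Subtype.coe_ne_coe.2 hbc, Subtype.coe_ne_coe.2 hbd,
    Subtype.coe_ne_coe.2 hcd, hadj⟩

theorem reachable_of_adj_of_adj (h : TwoK2Free G) {a b c d : V} (hab : G.Adj a b)
    (hcd : G.Adj c d) : G.Reachable a c := by
  by_contra hac
  have hbc : ¬ G.Reachable b c := fun hbc ↦ hac (hab.reachable.trans hbc)
  have had : ¬ G.Reachable a d := fun had ↦ hac (had.trans hcd.symm.reachable)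
  have hbd : ¬ G.Reachable b d := fun hbd ↦ had (hab.reachable.trans hbd)
  exact h ⟨a, b, c, d, hab.ne, fun e ↦ hac (e ▸ .rfl), fun e ↦ had (e ▸ .rfl),
    fun e ↦ hbc (e ▸ .rfl), fun e ↦ hbd (e ▸ .rfl), hcd.ne, hab, hcd,
    fun e ↦ hac e.reachable, fun e ↦ had e.reachable, fun e ↦ hbc e.reachable,
    fun e ↦ hbd e.reachable⟩

end TwoK2Free

namespace SimpleGraph

variable {V : Type*} (G : SimpleGraph V)

theorem isSeparator_neighborSet {u w : V} (hwu : w ≠ u) (huw : ¬ G.Adj u w) :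
    IsSeparator G (G.neighborSet u) := by
  have huN : u ∉ G.neighborSet u := G.irrefl
  refine ⟨fun h ↦ huN (h ▸ Set.mem_univ u), fun hconn ↦ ?_⟩
  obtain ⟨p⟩ := hconn.preconnected ⟨u, huN⟩ ⟨w, fun h ↦ huw h⟩
  exact (p.getVert 1).2 (p.adj_snd (Walk.not_nil_of_ne (by simpa using hwu.symm)))

variable [Fintype V] [DecidableRel G.Adj]

theorem exists_ne_not_adj_of_forall_degree_le (hnc : ∃ v w : V, v ≠ w ∧ ¬ G.Adj v w)
    {u : V} (hu : ∀ v, G.degree u ≤ G.degree v) : ∃ w, w ≠ u ∧ ¬ G.Adj u w := by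
  by_contra! huniv
  obtain ⟨v, w, hvw, hnadj⟩ := hnc
  have hu_card : G.degree u = Fintype.card V - 1 :=
    (G.degree_eq_card_sub_one u).2 fun w hw ↦ huniv w hw.symm
  have hv : G.degree v = Fintype.card V - 1 := by
    have := G.degree_lt_card_verts v
    have := hu v
    omega
  exact hnadj ((G.degree_eq_card_sub_one v).1 hv hvw)

theorem exists_adj_notMem_of_ssubset_neighborSet {u v : V} {S : Set V}
    (hS : S ⊂ G.neighborSet u) (hdeg : G.degree u ≤ G.degree v) : ∃ y, G.Adj v y ∧ y ∉ S := by
  by_contra! hvS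
  have := Set.ncard_lt_ncard ((show G.neighborSet v ⊆ S from hvS).trans_ssubset hS)
  simp only [Set.ncard_eq_toFinset_card', Set.toFinset_card, card_neighborSet_eq_degree] at this
  omega

end SimpleGraph

theorem TwoK2Free.connected_induce_compl_of_ssubset_neighborSet {V : Type*} [Fintype V]
    {G : SimpleGraph V} [DecidableRel G.Adj] (h : TwoK2Free G) {u : V}
    (hu : ∀ v, G.degree u ≤ G.degree v) {S : Set V} (hS : S ⊂ G.neighborSet u) :
    (G.induce Sᶜ).Connected := by
  obtain ⟨x, hxN, hxS⟩ := Set.exists_of_ssubset hS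
  have huS : u ∉ S := fun huS ↦ G.irrefl (hS.subset huS)
  refine (connected_iff_exists_forall_reachable _).2 ⟨⟨u, huS⟩, fun ⟨v, hvS⟩ ↦ ?_⟩
  obtain ⟨y, hvy, hyS⟩ := G.exists_adj_notMem_of_ssubset_neighborSet hS (hu v)
  exact (h.induce Sᶜ).reachable_of_adj_of_adj (a := ⟨u, huS⟩) (b := ⟨x, hxS⟩)
    (c := ⟨v, hvS⟩) (d := ⟨y, hyS⟩) hxN hvy

theorem neighborhood_minDegree_isMinSeparator_general {V : Type*} [Fintype V]
    (G : SimpleGraph V) [DecidableRel G.Adj]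
    (hnc : ∃ u v : V, u ≠ v ∧ ¬ G.Adj u v)
    (h2k2 : TwoK2Free G) (u : V) (hu : ∀ v : V, G.degree u ≤ G.degree v) :
    IsMinSeparator G (G.neighborSet u) := by
  obtain ⟨w, hwu, huw⟩ := G.exists_ne_not_adj_of_forall_degree_le hnc hu
  exact ⟨G.isSeparator_neighborSet hwu huw,
    fun S hS hsep ↦ hsep.2 (h2k2.connected_induce_compl_of_ssubset_neighborSet hu hS)⟩

/-- In a connected non-complete `2K₂`-free graph, the neighborhood of a minimum degree
vertex is a minimal vertex separator. -/
theorem neighborhood_minDegree_isMinSeparator {V : Type*} [Fintype V]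
    (G : SimpleGraph V) [DecidableRel G.Adj]
    (hconn : G.Connected) (hnc : ∃ u v : V, u ≠ v ∧ ¬ G.Adj u v)
    (h2k2 : TwoK2Free G) (u : V) (hu : ∀ v : V, G.degree u ≤ G.degree v) :
    IsMinSeparator G (G.neighborSet u) :=
  neighborhood_minDegree_isMinSeparator_general G hnc h2k2 u hu
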